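/- Let N ≥ 2 be an integer, s ∈ (0,1), 0 < r₁ < r₂ < 1, and let F : closure(B_1) → [0,∞) be continuous. For i = 1, 2, let u_i ∈ C_0(B_1) be nonnegative, satisfy u_i = 0 on the closure of B_1 minus B_{r_i}, and be a classical solution of (−Δ)^s_{B_1} u_i + u_i = F in B_{r_i}. Then u₁ ≤ u₂ on B_1. -/
import Mathlib


open MeasureTheory Metric Set Filter

/-- The regional fractional Laplacian `(-Δ)^s_{B_1} u (x) = L` as a principal-value limit
(normalizing constant taken equal to 1). -/
def regLap (N : ℕ) (s : ℝ) (Ω : Set (EuclideanSpace ℝ (Fin N)))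
    (u : EuclideanSpace ℝ (Fin N) → ℝ) (x : EuclideanSpace ℝ (Fin N)) (L : ℝ) : Prop :=
  Filter.Tendsto
    (fun ε : ℝ => ∫ z in Ω \ Metric.ball x ε, (u x - u z) / ‖x - z‖ ^ ((N : ℝ) + 2 * s))
    (nhdsWithin 0 (Set.Ioi 0)) (nhds L)

/-- monotonicity with respect to the domain: if `u₁, u₂` are nonnegative
solutions in `C_0(B_1)` of `(-Δ)^s_{B_1} u + u = F` in `B_{r₁}` resp. `B_{r₂}` vanishing
outside `B_{r₁}` resp. `B_{r₂}`, with `r₁ < r₂`, then `u₁ ≤ u₂` on `B_1`. -/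
theorem stmt19 (N : ℕ) (hN : 2 ≤ N) (s r₁ r₂ : ℝ)
    (hs : s ∈ Set.Ioo (0 : ℝ) 1) (hr₁ : 0 < r₁) (hr₁₂ : r₁ < r₂) (hr₂ : r₂ < 1)
    (F : EuclideanSpace ℝ (Fin N) → ℝ)
    (hFc : ContinuousOn F (Metric.closedBall (0 : EuclideanSpace ℝ (Fin N)) 1))
    (hF0 : ∀ x ∈ Metric.closedBall (0 : EuclideanSpace ℝ (Fin N)) 1, 0 ≤ F x)
    (u₁ u₂ : EuclideanSpace ℝ (Fin N) → ℝ)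
    (hu₁c : ContinuousOn u₁ (Metric.closedBall (0 : EuclideanSpace ℝ (Fin N)) 1))
    (hu₂c : ContinuousOn u₂ (Metric.closedBall (0 : EuclideanSpace ℝ (Fin N)) 1))
    (hu₁b : ∀ x ∈ Metric.sphere (0 : EuclideanSpace ℝ (Fin N)) 1, u₁ x = 0)
    (hu₂b : ∀ x ∈ Metric.sphere (0 : EuclideanSpace ℝ (Fin N)) 1, u₂ x = 0)
    (hu₁0 : ∀ x ∈ Metric.closedBall (0 : EuclideanSpace ℝ (Fin N)) 1, 0 ≤ u₁ x)
    (hu₂0 : ∀ x ∈ Metric.closedBall (0 : EuclideanSpace ℝ (Fin N)) 1, 0 ≤ u₂ x)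
    (hu₁z : ∀ x ∈ Metric.closedBall (0 : EuclideanSpace ℝ (Fin N)) 1 \
      Metric.ball (0 : EuclideanSpace ℝ (Fin N)) r₁, u₁ x = 0)
    (hu₂z : ∀ x ∈ Metric.closedBall (0 : EuclideanSpace ℝ (Fin N)) 1 \
      Metric.ball (0 : EuclideanSpace ℝ (Fin N)) r₂, u₂ x = 0)
    (hu₁sol : ∀ x ∈ Metric.ball (0 : EuclideanSpace ℝ (Fin N)) r₁,
      ∃ L : ℝ, regLap N s (Metric.ball 0 1) u₁ x L ∧ L + u₁ x = F x)
    (hu₂sol : ∀ x ∈ Metric.ball (0 : EuclideanSpace ℝ (Fin N)) r₂,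
      ∃ L : ℝ, regLap N s (Metric.ball 0 1) u₂ x L ∧ L + u₂ x = F x) :
    ∀ x ∈ Metric.ball (0 : EuclideanSpace ℝ (Fin N)) 1, u₁ x ≤ u₂ x := by
  have hp0 : (0 : ℝ) ≤ (N : ℝ) + 2 * s := by
    have := hs.1
    have : (0:ℝ) ≤ (N:ℝ) := Nat.cast_nonneg N
    linarith [hs.1]
  set K := Metric.closedBall (0 : EuclideanSpace ℝ (Fin N)) 1 with hK
  have hKc : IsCompact K := isCompact_closedBall _ _
  have hKne : K.Nonempty := ⟨0, by simp [hK]⟩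
  have hwc : ContinuousOn (fun x => u₁ x - u₂ x) K := hu₁c.sub hu₂c
  obtain ⟨x₀, hx₀K, hx₀max⟩ := hKc.exists_isMaxOn hKne hwc
  have hmax : ∀ z ∈ K, u₁ z - u₂ z ≤ u₁ x₀ - u₂ x₀ := fun z hz => hx₀max hz
  rcases le_or_gt (u₁ x₀ - u₂ x₀) 0 with hM | hM
  · intro x hx
    have := hmax x (ball_subset_closedBall hx)
    linarith
  · exfalso
    -- x₀ must lie in ball 0 r₁
    have hx₀r₁ : x₀ ∈ Metric.ball (0 : EuclideanSpace ℝ (Fin N)) r₁ := by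
      by_contra h
      have h1 := hu₁z x₀ ⟨hx₀K, h⟩
      have h2 := hu₂0 x₀ hx₀K
      linarith
    have hx₀r₂ : x₀ ∈ Metric.ball (0 : EuclideanSpace ℝ (Fin N)) r₂ :=
      Metric.ball_subset_ball hr₁₂.le hx₀r₁
    obtain ⟨L₁, hL₁, hE₁⟩ := hu₁sol x₀ hx₀r₁
    obtain ⟨L₂, hL₂, hE₂⟩ := hu₂sol x₀ hx₀r₂
    unfold regLap at hL₁ hL₂
    have hsubK : Metric.ball (0 : EuclideanSpace ℝ (Fin N)) 1 ⊆ K :=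
      Metric.ball_subset_closedBall
    -- integrability of each truncated integrand
    have hint : ∀ ε : ℝ, 0 < ε → ∀ u : EuclideanSpace ℝ (Fin N) → ℝ, ContinuousOn u K →
        IntegrableOn (fun z => (u x₀ - u z) / ‖x₀ - z‖ ^ ((N : ℝ) + 2 * s))
          (Metric.ball (0 : EuclideanSpace ℝ (Fin N)) 1 \ Metric.ball x₀ ε) := by
      intro ε hε u hu
      have hsub : Metric.ball (0 : EuclideanSpace ℝ (Fin N)) 1 \ Metric.ball x₀ ε ⊆
          K \ Metric.ball x₀ ε := diff_subset_diff_left hsubK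
      refine IntegrableOn.mono_set ?_ hsub
      have hcpt : IsCompact (K \ Metric.ball x₀ ε) := hKc.diff isOpen_ball
      have hden : ∀ z ∈ K \ Metric.ball x₀ ε, ε ≤ ‖x₀ - z‖ := by
        intro z hz
        have := hz.2
        rw [Metric.mem_ball, not_lt, dist_eq_norm, norm_sub_rev] at this
        exact this
      refine ContinuousOn.integrableOn_compact hcpt ?_
      apply ContinuousOn.div
      · exact continuousOn_const.sub (hu.mono diff_subset)
      · exact (Continuous.rpow_const
          ((continuous_const.sub continuous_id).norm) (fun z => Or.inr hp0)).continuousOn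
      · intro z hz
        exact (Real.rpow_pos_of_pos (lt_of_lt_of_le hε (hden z hz)) _).ne'
    -- the combined limit
    have hT : Filter.Tendsto
        (fun ε : ℝ =>
          (∫ z in Metric.ball (0 : EuclideanSpace ℝ (Fin N)) 1 \ Metric.ball x₀ ε,
            (u₁ x₀ - u₁ z) / ‖x₀ - z‖ ^ ((N : ℝ) + 2 * s)) -
          ∫ z in Metric.ball (0 : EuclideanSpace ℝ (Fin N)) 1 \ Metric.ball x₀ ε,
            (u₂ x₀ - u₂ z) / ‖x₀ - z‖ ^ ((N : ℝ) + 2 * s))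
        (nhdsWithin 0 (Set.Ioi 0)) (nhds (L₁ - L₂)) := hL₁.sub hL₂
    have hev : ∀ᶠ ε in nhdsWithin (0:ℝ) (Set.Ioi 0),
        (0:ℝ) ≤ (∫ z in Metric.ball (0 : EuclideanSpace ℝ (Fin N)) 1 \ Metric.ball x₀ ε,
            (u₁ x₀ - u₁ z) / ‖x₀ - z‖ ^ ((N : ℝ) + 2 * s)) -
          ∫ z in Metric.ball (0 : EuclideanSpace ℝ (Fin N)) 1 \ Metric.ball x₀ ε,
            (u₂ x₀ - u₂ z) / ‖x₀ - z‖ ^ ((N : ℝ) + 2 * s) := by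
      filter_upwards [self_mem_nhdsWithin] with ε hε
      have hε' : (0:ℝ) < ε := hε
      rw [← MeasureTheory.integral_sub (hint ε hε' u₁ hu₁c) (hint ε hε' u₂ hu₂c)]
      apply MeasureTheory.setIntegral_nonneg (measurableSet_ball.diff measurableSet_ball)
      intro z hz
      rw [div_sub_div_same]
      apply div_nonneg
      · have := hmax z (hsubK hz.1)
        linarith
      · exact Real.rpow_nonneg (norm_nonneg _) _
    have h0 : (0:ℝ) ≤ L₁ - L₂ := ge_of_tendsto hT hev
    linarith
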